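/- Let U, V, X, A, Y, Z be random variables on finite sets forming the Markov chain U − V − (X, A) − (Y, Z). Then I(X; A, U, V) − I(X; A) − I(U; X | A) − I(V; X | A, U, Y) = I(V; Y | A, U). -/
import Mathlib


open MeasureTheory

/-- `prob μ X x = P[X = x]`. -/
noncomputable def prob {Ω : Type*} [MeasurableSpace Ω] (μ : Measure Ω)
    {α : Type*} (X : Ω → α) (x : α) : ℝ :=
  (μ (X ⁻¹' {x})).toReal

/-- Shannon entropy (in bits) of a random variable with values in a finite set. -/
noncomputable def ent {Ω : Type*} [MeasurableSpace Ω] (μ : Measure Ω)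
    {α : Type*} [Fintype α] (X : Ω → α) : ℝ :=
  ∑ x : α, -(prob μ X x * Real.logb 2 (prob μ X x))

/-- Conditional entropy `H(X | Y)` in bits. -/
noncomputable def condEnt {Ω : Type*} [MeasurableSpace Ω] (μ : Measure Ω)
    {α β : Type*} [Fintype α] [Fintype β] (X : Ω → α) (Y : Ω → β) : ℝ :=
  ent μ (fun ω => (X ω, Y ω)) - ent μ Y

/-- Mutual information `I(X; Y)` in bits. -/
noncomputable def mutInf {Ω : Type*} [MeasurableSpace Ω] (μ : Measure Ω)
    {α β : Type*} [Fintype α] [Fintype β] (X : Ω → α) (Y : Ω → β) : ℝ :=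
  ent μ X + ent μ Y - ent μ (fun ω => (X ω, Y ω))

/-- Conditional mutual information `I(X; Y | Z)` in bits. -/
noncomputable def condMutInf {Ω : Type*} [MeasurableSpace Ω] (μ : Measure Ω)
    {α β γ : Type*} [Fintype α] [Fintype β] [Fintype γ]
    (X : Ω → α) (Y : Ω → β) (Z : Ω → γ) : ℝ :=
  condEnt μ X Z - condEnt μ X (fun ω => (Y ω, Z ω))

/-- `X` and `Y` are conditionally independent given `Z`:
`P[X=x, Y=y, Z=z] · P[Z=z] = P[X=x, Z=z] · P[Y=y, Z=z]` for all values. -/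
def CondIndepRV {Ω : Type*} [MeasurableSpace Ω] (μ : Measure Ω)
    {α β γ : Type*} (X : Ω → α) (Y : Ω → β) (Z : Ω → γ) : Prop :=
  ∀ (x : α) (y : β) (z : γ),
    prob μ (fun ω => ((X ω, Y ω), Z ω)) ((x, y), z) * prob μ Z z =
      prob μ (fun ω => (X ω, Z ω)) (x, z) * prob μ (fun ω => (Y ω, Z ω)) (y, z)

section helpers

variable {Ω : Type*} [MeasurableSpace Ω] (μ : Measure Ω) [IsProbabilityMeasure μ]

lemma prob_nonneg {α : Type*} (X : Ω → α) (x : α) : 0 ≤ prob μ X x :=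
  ENNReal.toReal_nonneg

lemma prob_congr {α β : Type*} {X : Ω → α} {Y : Ω → β} {x : α} {y : β}
    (h : X ⁻¹' {x} = Y ⁻¹' {y}) : prob μ X x = prob μ Y y := by
  unfold prob; rw [h]

lemma prob_mono {α β : Type*} {X : Ω → α} {Y : Ω → β} {x : α} {y : β}
    (h : X ⁻¹' {x} ⊆ Y ⁻¹' {y}) : prob μ X x ≤ prob μ Y y :=
  ENNReal.toReal_mono (measure_ne_top μ _) (measure_mono h)

lemma meas_pair {α β : Type*} {S : Ω → α} {T : Ω → β}
    (hS : ∀ a, MeasurableSet (S ⁻¹' {a})) (hT : ∀ b, MeasurableSet (T ⁻¹' {b})) :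
    ∀ p : α × β, MeasurableSet ((fun ω => (S ω, T ω)) ⁻¹' {p}) := by
  rintro ⟨a, b⟩
  have h : (fun ω => (S ω, T ω)) ⁻¹' {(a, b)} = S ⁻¹' {a} ∩ T ⁻¹' {b} := by
    ext ω; simp [Prod.ext_iff]
  rw [h]; exact (hS a).inter (hT b)

lemma sum_prob_snd {σ τ : Type*} [Fintype τ] (S : Ω → σ) (T : Ω → τ)
    (hS : ∀ s, MeasurableSet (S ⁻¹' {s})) (hT : ∀ t, MeasurableSet (T ⁻¹' {t})) (s : σ) :
    ∑ t : τ, prob μ (fun ω => (S ω, T ω)) (s, t) = prob μ S s := by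
  have h1 : ∀ t : τ, (fun ω => (S ω, T ω)) ⁻¹' {(s, t)} = S ⁻¹' {s} ∩ T ⁻¹' {t} := by
    intro t; ext ω; simp [Prod.ext_iff]
  have hdisj : Pairwise (Function.onFun Disjoint (fun t : τ => S ⁻¹' {s} ∩ T ⁻¹' {t})) := by
    intro t t' htt'
    simp only [Function.onFun, Set.disjoint_left]
    rintro ω ⟨_, h3⟩ ⟨_, h4⟩
    simp only [Set.mem_preimage, Set.mem_singleton_iff] at h3 h4
    exact htt' (h3.symm.trans h4 ▸ rfl)
  unfold prob
  rw [← ENNReal.toReal_sum (fun t _ => measure_ne_top μ _)]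
  congr 1
  have h2 : S ⁻¹' {s} = ⋃ t : τ, S ⁻¹' {s} ∩ T ⁻¹' {t} := by
    ext ω; simp
  rw [h2, measure_iUnion hdisj (fun t => (hS s).inter (hT t)), tsum_fintype]
  exact Finset.sum_congr rfl fun t _ => by rw [h1 t]

lemma prob_comp_not_mem {α β : Type*} {T : Ω → α} (f : α → β) {b : β} (hb : ∀ a, f a ≠ b) :
    prob μ (fun ω => f (T ω)) b = 0 := by
  have h : (fun ω => f (T ω)) ⁻¹' {b} = ∅ := by
    ext ω; simp only [Set.mem_preimage, Set.mem_singleton_iff, Set.mem_empty_iff_false,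
      iff_false]
    exact hb _
  unfold prob; rw [h]; simp

lemma ent_comp_inj {α β : Type*} [Fintype α] [Fintype β] [DecidableEq β] (T : Ω → α) (f : α → β)
    (hf : Function.Injective f) :
    ent μ (fun ω => f (T ω)) = ent μ T := by
  unfold ent
  have h1 : ∀ a : α, prob μ (fun ω => f (T ω)) (f a) = prob μ T a := fun a =>
    prob_congr μ (by ext ω; simp [hf.eq_iff])
  set g : β → ℝ := fun b => -(prob μ (fun ω => f (T ω)) b *
      Real.logb 2 (prob μ (fun ω => f (T ω)) b)) with hg
  have h2 : ∑ b ∈ Finset.univ.image f, g b = ∑ a : α, g (f a) :=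
    Finset.sum_image (fun a _ a' _ h => hf h)
  have h3 : ∑ b : β, g b = ∑ b ∈ Finset.univ.image f, g b := by
    refine (Finset.sum_subset (Finset.subset_univ _) fun b _ hb => ?_).symm
    rw [hg]
    simp only
    rw [prob_comp_not_mem μ f (fun a ha => hb (Finset.mem_image.mpr ⟨a, Finset.mem_univ a, ha⟩))]
    simp
  rw [h3, h2]
  exact Finset.sum_congr rfl fun a _ => by simp only [hg, h1 a]

end helpers
section keylemma

variable {Ω : Type*} [MeasurableSpace Ω] (μ : Measure Ω) [IsProbabilityMeasure μ]

lemma ent_condIndep {α β γ : Type*} [Fintype α] [Fintype β] [Fintype γ]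
    (V : Ω → α) (Y : Ω → β) (W : Ω → γ)
    (hV : ∀ a, MeasurableSet (V ⁻¹' {a})) (hY : ∀ b, MeasurableSet (Y ⁻¹' {b}))
    (hW : ∀ c, MeasurableSet (W ⁻¹' {c}))
    (h : ∀ v y w, prob μ (fun ω => (V ω, Y ω, W ω)) (v, y, w) * prob μ W w =
      prob μ (fun ω => (V ω, W ω)) (v, w) * prob μ (fun ω => (Y ω, W ω)) (y, w)) :
    ent μ (fun ω => (V ω, Y ω, W ω)) + ent μ W =
      ent μ (fun ω => (V ω, W ω)) + ent μ (fun ω => (Y ω, W ω)) := by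
  classical
  set p3 : α → β → γ → ℝ := fun v y w => prob μ (fun ω => (V ω, Y ω, W ω)) (v, y, w) with hp3
  set pVW : α → γ → ℝ := fun v w => prob μ (fun ω => (V ω, W ω)) (v, w) with hpVW
  set pYW : β → γ → ℝ := fun y w => prob μ (fun ω => (Y ω, W ω)) (y, w) with hpYW
  set pW : γ → ℝ := fun w => prob μ W w with hpW
  -- marginalization facts
  have m1 : ∀ v w, (∑ y, p3 v y w) = pVW v w := by
    intro v w
    have hc : ∀ y, p3 v y w = prob μ (fun ω => ((V ω, W ω), Y ω)) ((v, w), y) := fun y =>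
      prob_congr μ (by ext ω; simp only [Set.mem_preimage, Set.mem_singleton_iff,
        Prod.mk.injEq]; tauto)
    simp only [hc]
    exact sum_prob_snd μ _ _ (meas_pair hV hW) hY (v, w)
  have m2 : ∀ y w, (∑ v, p3 v y w) = pYW y w := by
    intro y w
    have hc : ∀ v, p3 v y w = prob μ (fun ω => ((Y ω, W ω), V ω)) ((y, w), v) := fun v =>
      prob_congr μ (by ext ω; simp only [Set.mem_preimage, Set.mem_singleton_iff,
        Prod.mk.injEq]; tauto)
    simp only [hc]
    exact sum_prob_snd μ _ _ (meas_pair hY hW) hV (y, w)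
  have m3 : ∀ w, (∑ v, pVW v w) = pW w := by
    intro w
    have hc : ∀ v, pVW v w = prob μ (fun ω => (W ω, V ω)) (w, v) := fun v =>
      prob_congr μ (by ext ω; simp only [Set.mem_preimage, Set.mem_singleton_iff,
        Prod.mk.injEq]; tauto)
    simp only [hc]
    exact sum_prob_snd μ _ _ hW hV w
  have m4 : ∀ w, (∑ v, ∑ y, p3 v y w) = pW w := by
    intro w
    rw [show (∑ v, ∑ y, p3 v y w) = ∑ v, pVW v w from
      Finset.sum_congr rfl fun v _ => m1 v w]
    exact m3 w
  -- pointwise identity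
  have key : ∀ v y w,
      -(p3 v y w * Real.logb 2 (p3 v y w)) + -(p3 v y w * Real.logb 2 (pW w)) =
      -(p3 v y w * Real.logb 2 (pVW v w)) + -(p3 v y w * Real.logb 2 (pYW y w)) := by
    intro v y w
    by_cases hp : p3 v y w = 0
    · rw [hp]; ring
    · have hp0 : 0 < p3 v y w := (prob_nonneg μ _ _).lt_of_ne (Ne.symm hp)
      have hs1 : p3 v y w ≤ pVW v w := prob_mono μ (by
        intro ω hω
        simp only [Set.mem_preimage, Set.mem_singleton_iff, Prod.mk.injEq] at hω ⊢
        tauto)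
      have hs2 : p3 v y w ≤ pYW y w := prob_mono μ (by
        intro ω hω
        simp only [Set.mem_preimage, Set.mem_singleton_iff, Prod.mk.injEq] at hω ⊢
        tauto)
      have hs3 : p3 v y w ≤ pW w := prob_mono μ (by
        intro ω hω
        simp only [Set.mem_preimage, Set.mem_singleton_iff, Prod.mk.injEq] at hω ⊢
        tauto)
      have h1 : 0 < pVW v w := lt_of_lt_of_le hp0 hs1
      have h2 : 0 < pYW y w := lt_of_lt_of_le hp0 hs2
      have h3 : 0 < pW w := lt_of_lt_of_le hp0 hs3
      have hlog : Real.logb 2 (p3 v y w) + Real.logb 2 (pW w) =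
          Real.logb 2 (pVW v w) + Real.logb 2 (pYW y w) := by
        rw [← Real.logb_mul (ne_of_gt hp0) (ne_of_gt h3),
          ← Real.logb_mul (ne_of_gt h1) (ne_of_gt h2), h v y w]
      linear_combination (-(p3 v y w)) * hlog
  -- assemble
  unfold ent
  simp only [Fintype.sum_prod_type]
  have c1 : (∑ v : α, ∑ y : β, ∑ w : γ, -(p3 v y w * Real.logb 2 (p3 v y w)))
      = ∑ w : γ, ∑ v : α, ∑ y : β, -(p3 v y w * Real.logb 2 (p3 v y w)) :=
    (Finset.sum_congr rfl fun v _ => Finset.sum_comm).trans Finset.sum_comm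
  have c2 : (∑ v : α, ∑ w : γ, -(pVW v w * Real.logb 2 (pVW v w)))
      = ∑ w : γ, ∑ v : α, -(pVW v w * Real.logb 2 (pVW v w)) := Finset.sum_comm
  have c3 : (∑ y : β, ∑ w : γ, -(pYW y w * Real.logb 2 (pYW y w)))
      = ∑ w : γ, ∑ y : β, -(pYW y w * Real.logb 2 (pYW y w)) := Finset.sum_comm
  rw [c1, c2, c3, ← Finset.sum_add_distrib, ← Finset.sum_add_distrib]
  refine Finset.sum_congr rfl fun w _ => ?_
  rw [show -(pW w * Real.logb 2 (pW w)) = ∑ v, ∑ y, -(p3 v y w * Real.logb 2 (pW w)) by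
    generalize Real.logb 2 (pW w) = L
    rw [← m4 w, Finset.sum_mul, ← Finset.sum_neg_distrib]
    exact Finset.sum_congr rfl fun v _ => by rw [Finset.sum_mul, ← Finset.sum_neg_distrib]]
  rw [show (∑ v, -(pVW v w * Real.logb 2 (pVW v w)))
      = ∑ v, ∑ y, -(p3 v y w * Real.logb 2 (pVW v w)) from
    Finset.sum_congr rfl fun v _ => by
      generalize Real.logb 2 (pVW v w) = L
      rw [← m1 v w, Finset.sum_mul, ← Finset.sum_neg_distrib]]
  rw [show (∑ y, -(pYW y w * Real.logb 2 (pYW y w)))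
      = ∑ y, ∑ v, -(p3 v y w * Real.logb 2 (pYW y w)) from
    Finset.sum_congr rfl fun y _ => by
      generalize Real.logb 2 (pYW y w) = L
      rw [← m2 y w, Finset.sum_mul, ← Finset.sum_neg_distrib]]
  rw [show (∑ y, ∑ v, -(p3 v y w * Real.logb 2 (pYW y w)))
      = ∑ v, ∑ y, -(p3 v y w * Real.logb 2 (pYW y w)) from Finset.sum_comm]
  simp only [← Finset.sum_add_distrib]
  exact Finset.sum_congr rfl fun v _ => Finset.sum_congr rfl fun y _ => key v y w

end keylemma
/-- Under the Markov chain `U − V − (X,A) − (Y,Z)`, the single-letter secret-key-rate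
identity holds:
`I(X;A,U,V) − I(X;A) − I(U;X|A) − I(V;X|A,U,Y) = I(V;Y|A,U)`. -/
theorem stmt13 {Ω 𝒰 𝒱 𝒳 𝒜 𝒴 𝒵 : Type*} [MeasurableSpace Ω]
    (μ : Measure Ω) [IsProbabilityMeasure μ]
    [Fintype 𝒰] [Fintype 𝒱] [Fintype 𝒳] [Fintype 𝒜] [Fintype 𝒴] [Fintype 𝒵]
    [MeasurableSpace 𝒰] [MeasurableSingletonClass 𝒰]
    [MeasurableSpace 𝒱] [MeasurableSingletonClass 𝒱]
    [MeasurableSpace 𝒳] [MeasurableSingletonClass 𝒳]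
    [MeasurableSpace 𝒜] [MeasurableSingletonClass 𝒜]
    [MeasurableSpace 𝒴] [MeasurableSingletonClass 𝒴]
    [MeasurableSpace 𝒵] [MeasurableSingletonClass 𝒵]
    (U : Ω → 𝒰) (V : Ω → 𝒱) (X : Ω → 𝒳) (A : Ω → 𝒜) (Y : Ω → 𝒴) (Z : Ω → 𝒵)
    (hU : Measurable U) (hV : Measurable V) (hX : Measurable X)
    (hA : Measurable A) (hY : Measurable Y) (hZ : Measurable Z)
    (hMarkov1 : CondIndepRV μ U (fun ω => (X ω, A ω, Y ω, Z ω)) V)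
    (hMarkov2 : CondIndepRV μ (fun ω => (U ω, V ω)) (fun ω => (Y ω, Z ω))
      (fun ω => (X ω, A ω))) :
    mutInf μ X (fun ω => (A ω, U ω, V ω)) - mutInf μ X A - condMutInf μ U X A -
        condMutInf μ V X (fun ω => (A ω, U ω, Y ω)) =
      condMutInf μ V Y (fun ω => (A ω, U ω)) := by

  classical
  have mU : ∀ u, MeasurableSet (U ⁻¹' {u}) := fun u => hU (measurableSet_singleton u)
  have mV : ∀ v, MeasurableSet (V ⁻¹' {v}) := fun v => hV (measurableSet_singleton v)
  have mX : ∀ x, MeasurableSet (X ⁻¹' {x}) := fun x => hX (measurableSet_singleton x)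
  have mA : ∀ a, MeasurableSet (A ⁻¹' {a}) := fun a => hA (measurableSet_singleton a)
  have mY : ∀ y, MeasurableSet (Y ⁻¹' {y}) := fun y => hY (measurableSet_singleton y)
  have mZ : ∀ z, MeasurableSet (Z ⁻¹' {z}) := fun z => hZ (measurableSet_singleton z)
  have hS5 : ∀ p : 𝒰 × 𝒱 × 𝒳 × 𝒜 × 𝒴,
      MeasurableSet ((fun ω => (U ω, V ω, X ω, A ω, Y ω)) ⁻¹' {p}) :=
    meas_pair mU (meas_pair mV (meas_pair mX (meas_pair mA mY)))
  have hS3 : ∀ p : 𝒳 × 𝒜 × 𝒴,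
      MeasurableSet ((fun ω => (X ω, A ω, Y ω)) ⁻¹' {p}) :=
    meas_pair mX (meas_pair mA mY)
  have hS4 : ∀ p : 𝒰 × 𝒳 × 𝒜 × 𝒴,
      MeasurableSet ((fun ω => (U ω, X ω, A ω, Y ω)) ⁻¹' {p}) :=
    meas_pair mU (meas_pair mX (meas_pair mA mY))
  have hUXA : ∀ p : 𝒰 × 𝒳 × 𝒜,
      MeasurableSet ((fun ω => (U ω, X ω, A ω)) ⁻¹' {p}) :=
    meas_pair mU (meas_pair mX mA)
  -- Step 1: marginalize Z out of the Markov condition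
  have Eq1 : ∀ (u : 𝒰) (v : 𝒱) (x : 𝒳) (a : 𝒜) (y : 𝒴),
      prob μ (fun ω => (U ω, V ω, X ω, A ω, Y ω)) (u, v, x, a, y) *
        prob μ (fun ω => (X ω, A ω)) (x, a) =
      prob μ (fun ω => (U ω, V ω, X ω, A ω)) (u, v, x, a) *
        prob μ (fun ω => (X ω, A ω, Y ω)) (x, a, y) := by
    intro u v x a y
    have hz : ∀ z : 𝒵,
        prob μ (fun ω => ((U ω, V ω, X ω, A ω, Y ω), Z ω)) ((u, v, x, a, y), z) *
          prob μ (fun ω => (X ω, A ω)) (x, a) =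
        prob μ (fun ω => (U ω, V ω, X ω, A ω)) (u, v, x, a) *
          prob μ (fun ω => ((X ω, A ω, Y ω), Z ω)) ((x, a, y), z) := by
      intro z
      have h0 : prob μ (fun ω => (((U ω, V ω), (Y ω, Z ω)), (X ω, A ω)))
            (((u, v), (y, z)), (x, a)) * prob μ (fun ω => (X ω, A ω)) (x, a) =
          prob μ (fun ω => ((U ω, V ω), (X ω, A ω))) ((u, v), (x, a)) *
            prob μ (fun ω => ((Y ω, Z ω), (X ω, A ω))) ((y, z), (x, a)) :=
        hMarkov2 (u, v) (y, z) (x, a)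
      have c1 : prob μ (fun ω => (((U ω, V ω), (Y ω, Z ω)), (X ω, A ω)))
            (((u, v), (y, z)), (x, a)) =
          prob μ (fun ω => ((U ω, V ω, X ω, A ω, Y ω), Z ω)) ((u, v, x, a, y), z) :=
        prob_congr μ (by
          ext ω; simp only [Set.mem_preimage, Set.mem_singleton_iff, Prod.mk.injEq]; tauto)
      have c2 : prob μ (fun ω => ((U ω, V ω), (X ω, A ω))) ((u, v), (x, a)) =
          prob μ (fun ω => (U ω, V ω, X ω, A ω)) (u, v, x, a) :=
        prob_congr μ (by
          ext ω; simp only [Set.mem_preimage, Set.mem_singleton_iff, Prod.mk.injEq]; tauto)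
      have c3 : prob μ (fun ω => ((Y ω, Z ω), (X ω, A ω))) ((y, z), (x, a)) =
          prob μ (fun ω => ((X ω, A ω, Y ω), Z ω)) ((x, a, y), z) :=
        prob_congr μ (by
          ext ω; simp only [Set.mem_preimage, Set.mem_singleton_iff, Prod.mk.injEq]; tauto)
      rw [c1, c2, c3] at h0
      exact h0
    have s5 : (∑ z : 𝒵, prob μ (fun ω => ((U ω, V ω, X ω, A ω, Y ω), Z ω))
          ((u, v, x, a, y), z)) =
        prob μ (fun ω => (U ω, V ω, X ω, A ω, Y ω)) (u, v, x, a, y) :=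
      sum_prob_snd μ _ _ hS5 mZ _
    have s3 : (∑ z : 𝒵, prob μ (fun ω => ((X ω, A ω, Y ω), Z ω)) ((x, a, y), z)) =
        prob μ (fun ω => (X ω, A ω, Y ω)) (x, a, y) :=
      sum_prob_snd μ _ _ hS3 mZ _
    rw [← s5, ← s3, Finset.sum_mul, Finset.mul_sum]
    exact Finset.sum_congr rfl fun z _ => hz z
  -- Step 2: marginalize V out of Eq1
  have Eq2 : ∀ (u : 𝒰) (x : 𝒳) (a : 𝒜) (y : 𝒴),
      prob μ (fun ω => (U ω, X ω, A ω, Y ω)) (u, x, a, y) *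
        prob μ (fun ω => (X ω, A ω)) (x, a) =
      prob μ (fun ω => (U ω, X ω, A ω)) (u, x, a) *
        prob μ (fun ω => (X ω, A ω, Y ω)) (x, a, y) := by
    intro u x a y
    have hv : ∀ v : 𝒱,
        prob μ (fun ω => ((U ω, X ω, A ω, Y ω), V ω)) ((u, x, a, y), v) *
          prob μ (fun ω => (X ω, A ω)) (x, a) =
        prob μ (fun ω => ((U ω, X ω, A ω), V ω)) ((u, x, a), v) *
          prob μ (fun ω => (X ω, A ω, Y ω)) (x, a, y) := by
      intro v
      have c1 : prob μ (fun ω => ((U ω, X ω, A ω, Y ω), V ω)) ((u, x, a, y), v) =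
          prob μ (fun ω => (U ω, V ω, X ω, A ω, Y ω)) (u, v, x, a, y) :=
        prob_congr μ (by
          ext ω; simp only [Set.mem_preimage, Set.mem_singleton_iff, Prod.mk.injEq]; tauto)
      have c2 : prob μ (fun ω => ((U ω, X ω, A ω), V ω)) ((u, x, a), v) =
          prob μ (fun ω => (U ω, V ω, X ω, A ω)) (u, v, x, a) :=
        prob_congr μ (by
          ext ω; simp only [Set.mem_preimage, Set.mem_singleton_iff, Prod.mk.injEq]; tauto)
      rw [c1, c2]
      exact Eq1 u v x a y
    have s1 : (∑ v : 𝒱, prob μ (fun ω => ((U ω, X ω, A ω, Y ω), V ω)) ((u, x, a, y), v)) =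
        prob μ (fun ω => (U ω, X ω, A ω, Y ω)) (u, x, a, y) :=
      sum_prob_snd μ _ _ hS4 mV _
    have s2 : (∑ v : 𝒱, prob μ (fun ω => ((U ω, X ω, A ω), V ω)) ((u, x, a), v)) =
        prob μ (fun ω => (U ω, X ω, A ω)) (u, x, a) :=
      sum_prob_snd μ _ _ hUXA mV _
    rw [← s1, ← s2, Finset.sum_mul, Finset.sum_mul]
    exact Finset.sum_congr rfl fun v _ => hv v
  -- Step 3: conditional independence of V and Y given (U, X, A)
  have hcond : ∀ (v : 𝒱) (y : 𝒴) (w : 𝒰 × 𝒳 × 𝒜),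
      prob μ (fun ω => (V ω, Y ω, U ω, X ω, A ω)) (v, y, w) *
        prob μ (fun ω => (U ω, X ω, A ω)) w =
      prob μ (fun ω => (V ω, U ω, X ω, A ω)) (v, w) *
        prob μ (fun ω => (Y ω, U ω, X ω, A ω)) (y, w) := by
    rintro v y ⟨u, x, a⟩
    have cA : prob μ (fun ω => (V ω, Y ω, U ω, X ω, A ω)) (v, y, u, x, a) =
        prob μ (fun ω => (U ω, V ω, X ω, A ω, Y ω)) (u, v, x, a, y) :=
      prob_congr μ (by
        ext ω; simp only [Set.mem_preimage, Set.mem_singleton_iff, Prod.mk.injEq]; tauto)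
    have cC : prob μ (fun ω => (V ω, U ω, X ω, A ω)) (v, u, x, a) =
        prob μ (fun ω => (U ω, V ω, X ω, A ω)) (u, v, x, a) :=
      prob_congr μ (by
        ext ω; simp only [Set.mem_preimage, Set.mem_singleton_iff, Prod.mk.injEq]; tauto)
    have cD : prob μ (fun ω => (Y ω, U ω, X ω, A ω)) (y, u, x, a) =
        prob μ (fun ω => (U ω, X ω, A ω, Y ω)) (u, x, a, y) :=
      prob_congr μ (by
        ext ω; simp only [Set.mem_preimage, Set.mem_singleton_iff, Prod.mk.injEq]; tauto)
    rw [cA, cC, cD]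
    by_cases hxa : prob μ (fun ω => (X ω, A ω)) (x, a) = 0
    · have hA0 : prob μ (fun ω => (U ω, V ω, X ω, A ω, Y ω)) (u, v, x, a, y) = 0 := by
        have hle : prob μ (fun ω => (U ω, V ω, X ω, A ω, Y ω)) (u, v, x, a, y) ≤
            prob μ (fun ω => (X ω, A ω)) (x, a) := prob_mono μ (by
          intro ω hω
          simp only [Set.mem_preimage, Set.mem_singleton_iff, Prod.mk.injEq] at hω ⊢
          tauto)
        rw [hxa] at hle
        exact le_antisymm hle (prob_nonneg μ _ _)
      have hD0 : prob μ (fun ω => (U ω, X ω, A ω, Y ω)) (u, x, a, y) = 0 := by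
        have hle : prob μ (fun ω => (U ω, X ω, A ω, Y ω)) (u, x, a, y) ≤
            prob μ (fun ω => (X ω, A ω)) (x, a) := prob_mono μ (by
          intro ω hω
          simp only [Set.mem_preimage, Set.mem_singleton_iff, Prod.mk.injEq] at hω ⊢
          tauto)
        rw [hxa] at hle
        exact le_antisymm hle (prob_nonneg μ _ _)
      rw [hA0, hD0]
      ring
    · apply mul_right_cancel₀ hxa
      have e1 := Eq1 u v x a y
      have e2 := Eq2 u x a y
      linear_combination prob μ (fun ω => (U ω, X ω, A ω)) (u, x, a) * e1 -
        prob μ (fun ω => (U ω, V ω, X ω, A ω)) (u, v, x, a) * e2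
  -- Step 4: key entropy identity
  have hkey : ent μ (fun ω => (V ω, Y ω, U ω, X ω, A ω)) +
        ent μ (fun ω => (U ω, X ω, A ω)) =
      ent μ (fun ω => (V ω, U ω, X ω, A ω)) + ent μ (fun ω => (Y ω, U ω, X ω, A ω)) :=
    ent_condIndep μ V Y (fun ω => (U ω, X ω, A ω)) mV mY hUXA hcond
  -- entropy regrouping rewrites
  have rA : ent μ (fun ω => (V ω, A ω, U ω)) = ent μ (fun ω => (A ω, U ω, V ω)) :=
    ent_comp_inj μ (fun ω => (A ω, U ω, V ω)) (fun p => (p.2.2, p.1, p.2.1))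
      (by intro p q h; simp only [Prod.mk.injEq] at h; simp only [Prod.ext_iff]; tauto)
  have rB : ent μ (fun ω => (A ω, U ω)) = ent μ (fun ω => (U ω, A ω)) :=
    ent_comp_inj μ (fun ω => (U ω, A ω)) (fun p => (p.2, p.1))
      (by intro p q h; simp only [Prod.mk.injEq] at h; simp only [Prod.ext_iff]; tauto)
  have rC : ent μ (fun ω => (X ω, A ω, U ω, V ω)) = ent μ (fun ω => (V ω, U ω, X ω, A ω)) :=
    ent_comp_inj μ (fun ω => (V ω, U ω, X ω, A ω)) (fun p => (p.2.2.1, p.2.2.2, p.2.1, p.1))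
      (by intro p q h; simp only [Prod.mk.injEq] at h; simp only [Prod.ext_iff]; tauto)
  have rD : ent μ (fun ω => (V ω, Y ω, A ω, U ω)) = ent μ (fun ω => (V ω, A ω, U ω, Y ω)) :=
    ent_comp_inj μ (fun ω => (V ω, A ω, U ω, Y ω))
      (fun p => (p.1, p.2.2.2, p.2.1, p.2.2.1))
      (by intro p q h; simp only [Prod.mk.injEq] at h; simp only [Prod.ext_iff]; tauto)
  have rE : ent μ (fun ω => (Y ω, A ω, U ω)) = ent μ (fun ω => (A ω, U ω, Y ω)) :=
    ent_comp_inj μ (fun ω => (A ω, U ω, Y ω)) (fun p => (p.2.2, p.1, p.2.1))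
      (by intro p q h; simp only [Prod.mk.injEq] at h; simp only [Prod.ext_iff]; tauto)
  have rF : ent μ (fun ω => (V ω, X ω, A ω, U ω, Y ω)) =
      ent μ (fun ω => (V ω, Y ω, U ω, X ω, A ω)) :=
    ent_comp_inj μ (fun ω => (V ω, Y ω, U ω, X ω, A ω))
      (fun p => (p.1, p.2.2.2.1, p.2.2.2.2, p.2.2.1, p.2.1))
      (by intro p q h; simp only [Prod.mk.injEq] at h; simp only [Prod.ext_iff]; tauto)
  have rG : ent μ (fun ω => (X ω, A ω, U ω, Y ω)) = ent μ (fun ω => (Y ω, U ω, X ω, A ω)) :=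
    ent_comp_inj μ (fun ω => (Y ω, U ω, X ω, A ω)) (fun p => (p.2.2.1, p.2.2.2, p.2.1, p.1))
      (by intro p q h; simp only [Prod.mk.injEq] at h; simp only [Prod.ext_iff]; tauto)
  simp only [mutInf, condMutInf, condEnt]
  rw [rA, rB, rC, rD, rE, rF, rG]
  linarith [hkey]
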